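/- Suppose a stacked filter's negative layer is built from a sample of s i.i.d. negative queries drawn from the query distribution, storing every distinct key that appears in the sample. Then a future negative query for a key with query probability π is unprotected (absent from the negative layer) with probability (1 − π)^s ≤ e^{−πs}. Hence the expected false positive rate due to unprotected frequent keys, ∑_x π_x · (1 − π_x)^s · a, is at most a · max_t t·e^{−ts} · |support| ≤ a·|support|/(e·s), where a is the FPR of the positive layer. -/
import Mathlib


open Finset

lemma aux_exp_bound (s : ℕ) (hs : 1 ≤ s) (t : ℝ) (ht : 0 ≤ t) :
    t * Real.exp (-t * s) ≤ 1 / (Real.exp 1 * s) := by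
  have hs0 : (0:ℝ) < s := by exact_mod_cast hs
  have key : t * s ≤ Real.exp (t * s - 1) := by
    have := Real.add_one_le_exp (t * s - 1)
    linarith
  have hexp : (0:ℝ) < Real.exp (-t * s) := Real.exp_pos _
  have h1 : t * s * Real.exp (-t * s) ≤ Real.exp (t * s - 1) * Real.exp (-t * s) := by
    apply mul_le_mul_of_nonneg_right key hexp.le
  rw [← Real.exp_add] at h1
  have h2 : t * s - 1 + -t * s = -1 := by ring
  rw [h2] at h1
  have h3 : t * Real.exp (-t * s) ≤ Real.exp (-1) / s := by
    rw [le_div_iff₀ hs0]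
    nlinarith
  calc t * Real.exp (-t * s) ≤ Real.exp (-1) / s := h3
    _ = 1 / (Real.exp 1 * s) := by
        rw [Real.exp_neg]
        field_simp

/-- the stacked filter's negative layer stores every distinct key seen in
a sample of `s` i.i.d. negative queries, where key `x` has query probability `π x`
(with `∑ π ≤ 1`). A key of probability `π x` is unprotected with probability
`(1 − π x)^s ≤ e^{−π x · s}`; since `max_{t ≥ 0} t·e^{−ts} = 1/(e·s)`, the expected FPR
from unprotected keys `∑_x π x (1 − π x)^s · a` is at most `a · |support| / (e·s)`,
where `a` is the positive layer's FPR. -/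
theorem stmt_19 {X : Type*} [Fintype X] (s : ℕ) (hs : 1 ≤ s)
    (π : X → ℝ) (hπ0 : ∀ x, 0 ≤ π x) (hπ1 : ∀ x, π x ≤ 1)
    (hπsum : ∑ x, π x ≤ 1)
    (a : ℝ) (ha0 : 0 ≤ a) (ha1 : a ≤ 1) :
    (∀ x, (1 - π x) ^ s ≤ Real.exp (-(π x) * s)) ∧
    (∀ t : ℝ, 0 ≤ t → t * Real.exp (-t * s) ≤ 1 / (Real.exp 1 * s)) ∧
    (∑ x, π x * (1 - π x) ^ s * a ≤ a * (Fintype.card X : ℝ) / (Real.exp 1 * s)) := by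
  have hpow : ∀ x, (1 - π x) ^ s ≤ Real.exp (-(π x) * s) := by
    intro x
    have h1 : (1 : ℝ) - π x ≤ Real.exp (-(π x)) := by
      have := Real.add_one_le_exp (-(π x)); linarith
    calc (1 - π x) ^ s ≤ (Real.exp (-(π x))) ^ s :=
          pow_le_pow_left₀ (by linarith [hπ1 x]) h1 s
      _ = Real.exp (-(π x) * s) := by
          rw [← Real.exp_nat_mul]; ring_nf
  refine ⟨hpow, fun t ht => aux_exp_bound s hs t ht, ?_⟩
  have hterm : ∀ x, π x * (1 - π x) ^ s * a ≤ a / (Real.exp 1 * s) := by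
    intro x
    have h1 : π x * (1 - π x) ^ s ≤ π x * Real.exp (-(π x) * s) :=
      mul_le_mul_of_nonneg_left (hpow x) (hπ0 x)
    have h2 : π x * Real.exp (-(π x) * s) ≤ 1 / (Real.exp 1 * s) :=
      aux_exp_bound s hs (π x) (hπ0 x)
    have h3 : π x * (1 - π x) ^ s * a ≤ (1 / (Real.exp 1 * s)) * a := by
      exact mul_le_mul_of_nonneg_right (h1.trans h2) ha0
    calc π x * (1 - π x) ^ s * a ≤ (1 / (Real.exp 1 * s)) * a := h3
      _ ≤ a / (Real.exp 1 * s) := by rw [one_div, mul_comm, div_eq_mul_inv]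
  calc ∑ x, π x * (1 - π x) ^ s * a ≤ ∑ _x : X, a / (Real.exp 1 * s) :=
        Finset.sum_le_sum (fun x _ => hterm x)
    _ = (Fintype.card X : ℝ) * (a / (Real.exp 1 * s)) := by
        rw [Finset.sum_const, card_univ, nsmul_eq_mul]
    _ = a * (Fintype.card X : ℝ) / (Real.exp 1 * s) := by ring
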